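/- arXiv:1301.5659 — 6 statements merged into one kernel-verified Lean document; each statement's English description precedes it below -/
import Mathlib

section
/- Let n ≥ 4 and let R_{ij} be a bilinear form on an n-dimensional space with nondegenerate metric g. Define ρ and P as the projective and conformal Schouten tensors of R. If 2Σ^{km}_{l[i} ρ_{j]m} = 2S^{km}_{l[i} P_{j]m} for all i,j,k,l, then R_{ij} = (r/n) g_{ij} where r = g^{ij}R_{ij}; i.e. the Ricci tensor is pure trace (Einstein condition). -/
/-! With `D = ρ - P` and `Q_j^k = g^{km} P_jm`, summing out `m` turns the hypothesis into
`δ^k_l (D_ji - D_ij) + δ^k_i D_jl - δ^k_j D_il + g_li Q_j^k - g_lj Q_i^k = 0`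
(`WeylCoincidence g D Q`). Raising `l` and reading off components with four distinct indices
shows that `Q` is diagonal; then `D` is symmetric and `D_ij = g_ij Q_k^k` for every `k ≠ j`, and
as no column of `g` vanishes the diagonal of `Q` is constant, so `D = c g`. Since `ρ - P`
combines the symmetric and antisymmetric parts of `R` with nonzero coefficients, `R` is symmetric
and proportional to `g`; its trace fixes the factor `r / n`. -/

open Finset

section LinearAlgebra

variable {ι K : Type*} [Fintype ι]

lemma Finset.exists_notMem_of_card_lt_card_univ {s : Finset ι} (h : #s < Fintype.card ι) :
    ∃ x, x ∉ s := by
  obtain ⟨x, -, hx⟩ := exists_mem_notMem_of_card_lt_card (t := univ) (by simpa using h)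
  exact ⟨x, hx⟩

variable [DecidableEq ι] [Field K]

lemma sum_sigma_mul (T : ι → K) (i k l : ι) :
    ∑ m, ((if l = k then (1 : K) else 0) * (if i = m then 1 else 0)
      + (if l = m then 1 else 0) * (if i = k then 1 else 0)) * T m
      = (if l = k then 1 else 0) * T i + (if i = k then 1 else 0) * T l := by
  simp [add_mul, sum_add_distrib, add_comm]

def IsMatrixLeftInverse (ginv g : ι → ι → K) : Prop :=
  ∀ i j, ∑ k, ginv i k * g k j = if i = j then 1 else 0

lemma IsMatrixLeftInverse.exists_apply_ne_zero {g ginv : ι → ι → K}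
    (hinv : IsMatrixLeftInverse ginv g) (j : ι) : ∃ i, g i j ≠ 0 := by
  by_contra! h
  simpa [h] using hinv j j

lemma IsMatrixLeftInverse.sum_sum_mul_const_mul {g ginv : ι → ι → K}
    (hinv : IsMatrixLeftInverse ginv g) (hg : ∀ i j, g i j = g j i) (ν : K) :
    ∑ i, ∑ j, ginv i j * (ν * g i j) = Fintype.card ι * ν := by
  calc _ = ν * ∑ i, ∑ j, ginv i j * g j i := by
        simp only [mul_sum, hg _ (_ : ι)]
        exact sum_congr rfl fun _ _ => sum_congr rfl fun _ _ => by ring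
    _ = Fintype.card ι * ν := by
        rw [sum_congr rfl fun i _ => hinv i i]
        simp [mul_comm]

def WeylCoincidence (g D Q : ι → ι → K) : Prop :=
  ∀ i j k l, (if l = k then 1 else 0) * (D j i - D i j) + (if i = k then 1 else 0) * D j l
    - (if j = k then 1 else 0) * D i l + g l i * Q j k - g l j * Q i k = 0

namespace WeylCoincidence

variable {g ginv D Q : ι → ι → K}

lemma contract_ginv (h : WeylCoincidence g D Q) (hinv : IsMatrixLeftInverse ginv g) {i j k : ι}
    (hik : i ≠ k) (hjk : j ≠ k) (a : ι) :
    ginv a k * (D j i - D i j) + (if a = i then 1 else 0) * Q j k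
      - (if a = j then 1 else 0) * Q i k = 0 := by
  calc _ = ∑ l, ginv a l * ((if l = k then 1 else 0) * (D j i - D i j)
        + g l i * Q j k - g l j * Q i k) := by
        simp [mul_add, mul_sub, sum_add_distrib, sum_sub_distrib, ← mul_assoc, ← sum_mul,
          hinv _ _]
    _ = 0 := sum_eq_zero fun l _ => by simpa [hik, hjk] using congrArg (ginv a l * ·) (h i j k l)

lemma q_eq_zero_of_ne (h : WeylCoincidence g D Q) (hinv : IsMatrixLeftInverse ginv g)
    (hcard : 4 ≤ Fintype.card ι) {j k : ι} (hjk : j ≠ k) : Q j k = 0 := by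
  obtain ⟨i, hi⟩ := exists_notMem_of_card_lt_card_univ (s := {j, k})
    (by grind [card_le_two])
  obtain ⟨a, ha⟩ := exists_notMem_of_card_lt_card_univ (s := {i, j, k})
    (by grind [card_le_three])
  simp only [mem_insert, mem_singleton, not_or] at hi ha
  obtain ⟨hij, hik⟩ := hi
  obtain ⟨hai, haj, hak⟩ := ha
  have hQi := h.contract_ginv hinv hik hjk i
  have hQa := h.contract_ginv hinv hak hjk a
  have hcross := h.contract_ginv hinv hik hjk a
  simp only [if_true, if_neg hij, if_neg hai, if_neg haj] at hQi hQa hcross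
  -- `Q j k = -ginv i k * (D j i - D i j) = -ginv a k * (D j a - D a j)`, while
  -- `ginv a k * (D j i - D i j) = 0`
  have hsq : Q j k ^ 2 = 0 := by
    linear_combination Q j k * hQi - ginv i k * (D j i - D i j) * hQa
      + ginv i k * (D j a - D a j) * hcross
  exact pow_eq_zero_iff two_ne_zero |>.mp hsq

lemma d_symm (h : WeylCoincidence g D Q) (hinv : IsMatrixLeftInverse ginv g)
    (hcard : 4 ≤ Fintype.card ι) (i j : ι) : D j i = D i j := by
  obtain ⟨k, hk⟩ := exists_notMem_of_card_lt_card_univ (s := {i, j}) (by grind [card_le_two])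
  simp only [mem_insert, mem_singleton, not_or] at hk
  have hkk := h i j k k
  simp only [if_true, if_neg (Ne.symm hk.1), if_neg (Ne.symm hk.2),
    h.q_eq_zero_of_ne hinv hcard (Ne.symm hk.1),
    h.q_eq_zero_of_ne hinv hcard (Ne.symm hk.2)] at hkk
  linear_combination hkk

lemma d_eq_mul_q_diag (h : WeylCoincidence g D Q) (hinv : IsMatrixLeftInverse ginv g)
    (hcard : 4 ≤ Fintype.card ι) {j k : ι} (hjk : j ≠ k) (i : ι) :
    D i j = g i j * Q k k := by
  have hkji := h k j k i
  simp only [if_true, if_neg hjk, h.d_symm hinv hcard k j, h.q_eq_zero_of_ne hinv hcard hjk]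
    at hkji
  linear_combination hkji - h.d_symm hinv hcard i j

lemma q_diag_eq (h : WeylCoincidence g D Q) (hinv : IsMatrixLeftInverse ginv g)
    (hcard : 4 ≤ Fintype.card ι) (k k' : ι) : Q k k = Q k' k' := by
  obtain ⟨j, hj⟩ := exists_notMem_of_card_lt_card_univ (s := {k, k'}) (by grind [card_le_two])
  simp only [mem_insert, mem_singleton, not_or] at hj
  obtain ⟨i, hi⟩ := hinv.exists_apply_ne_zero j
  refine mul_left_cancel₀ hi ?_
  rw [← h.d_eq_mul_q_diag hinv hcard hj.1, ← h.d_eq_mul_q_diag hinv hcard hj.2]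

lemma exists_eq_mul (h : WeylCoincidence g D Q) (hinv : IsMatrixLeftInverse ginv g)
    (hcard : 4 ≤ Fintype.card ι) :
    ∃ c : K, ∀ i j, D i j = c * g i j := by
  obtain ⟨k⟩ : Nonempty ι := Fintype.card_pos_iff.mp (by omega)
  refine ⟨Q k k, fun i j => ?_⟩
  obtain ⟨k', hk'⟩ := exists_notMem_of_card_lt_card_univ (s := {j}) (by grind [card_singleton])
  rw [h.d_eq_mul_q_diag hinv hcard (Ne.symm (mem_singleton.not.mp hk')),
    h.q_diag_eq hinv hcard k', mul_comm]

end WeylCoincidence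

end LinearAlgebra

section Schouten

variable {ι : Type*}

noncomputable def projectiveSchouten (n : ℝ) (R : ι → ι → ℝ) (i j : ι) : ℝ :=
  (1 / (n - 1)) * ((R i j + R j i) / 2) + (1 / (n + 1)) * ((R i j - R j i) / 2)

noncomputable def conformalSchouten (n r : ℝ) (g R : ι → ι → ℝ) (i j : ι) : ℝ :=
  (1 / (n - 2)) * ((R i j + R j i) / 2) + (1 / n) * ((R i j - R j i) / 2)
    - (r / (2 * (n - 2) * (n - 1))) * g i j

lemma eq_mul_of_schouten_sub_eq_mul {n r c : ℝ} (hn : 4 ≤ n) {g R : ι → ι → ℝ}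
    (hg : ∀ i j, g i j = g j i)
    (hD : ∀ i j, projectiveSchouten n R i j - conformalSchouten n r g R i j = c * g i j)
    (i j : ι) : R i j = (r / 2 - (n - 1) * (n - 2) * c) * g i j := by
  have h0 : n ≠ 0 := by linarith
  have h1 : n - 1 ≠ 0 := by linarith
  have h2 : n - 2 ≠ 0 := by linarith
  have h3 : n + 1 ≠ 0 := by linarith
  have hij := hD i j
  have hji := hD j i
  unfold projectiveSchouten conformalSchouten at hij hji
  rw [hg j i] at hji
  have hsymm : R j i = R i j := by
    field_simp at hij hji
    have : (n - 1) * (n - 2) * (R j i - R i j) = 0 := by linear_combination (hij - hji) / 2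
    simpa [h1, h2, sub_eq_zero] using this
  rw [hsymm] at hij
  field_simp at hij
  apply mul_left_cancel₀ (mul_ne_zero (mul_ne_zero two_ne_zero h0) h3)
  linear_combination -hij

end Schouten

theorem weyl_coincidence_implies_einstein_general (n : ℕ) (hn : 4 ≤ n)
    (g ginv : Fin n → Fin n → ℝ)
    (hgsym : ∀ i j, g i j = g j i)
    (hinv : ∀ i j, ∑ k, ginv i k * g k j = if i = j then (1:ℝ) else 0)
    (R ρ P : Fin n → Fin n → ℝ) (r : ℝ)
    (hr : r = ∑ i, ∑ j, ginv i j * R i j)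
    (hρ : ∀ i j, ρ i j = (1/((n:ℝ) - 1)) * ((R i j + R j i)/2)
        + (1/((n:ℝ) + 1)) * ((R i j - R j i)/2))
    (hP : ∀ i j, P i j = (1/((n:ℝ) - 2)) * ((R i j + R j i)/2)
        + (1/(n:ℝ)) * ((R i j - R j i)/2)
        - (r/(2*((n:ℝ) - 2)*((n:ℝ) - 1))) * g i j)
    (heq : ∀ i j k l, ∑ m,
        (((if l = k then (1:ℝ) else 0) * (if i = m then (1:ℝ) else 0)
            + (if l = m then (1:ℝ) else 0) * (if i = k then (1:ℝ) else 0)) * ρ j m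
          - ((if l = k then (1:ℝ) else 0) * (if j = m then (1:ℝ) else 0)
            + (if l = m then (1:ℝ) else 0) * (if j = k then (1:ℝ) else 0)) * ρ i m)
      = ∑ m,
        (((if l = k then (1:ℝ) else 0) * (if i = m then (1:ℝ) else 0)
            + (if l = m then (1:ℝ) else 0) * (if i = k then (1:ℝ) else 0)
            - g l i * ginv k m) * P j m
          - ((if l = k then (1:ℝ) else 0) * (if j = m then (1:ℝ) else 0)
            + (if l = m then (1:ℝ) else 0) * (if j = k then (1:ℝ) else 0)
            - g l j * ginv k m) * P i m)) :
    ∀ i j, R i j = (r/(n:ℝ)) * g i j := by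
  have hW : WeylCoincidence g (fun i j => ρ i j - P i j)
      (fun j k => ∑ m, ginv k m * P j m) := fun i j k l => by
    have h := heq i j k l
    simp only [sub_mul, sum_sub_distrib, sum_sigma_mul, mul_assoc, ← mul_sum] at h
    linear_combination h
  obtain ⟨c, hc⟩ := hW.exists_eq_mul hinv (by simpa using hn)
  have hD : ∀ i j, projectiveSchouten n R i j - conformalSchouten n r g R i j = c * g i j := by
    intro i j
    rw [projectiveSchouten, conformalSchouten, ← hρ, ← hP]
    exact hc i j
  have hR := eq_mul_of_schouten_sub_eq_mul (by exact_mod_cast hn) hgsym hD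
  have htrace : r = n * (r / 2 - (n - 1) * (n - 2) * c) := by
    simpa only [hR, IsMatrixLeftInverse.sum_sum_mul_const_mul hinv hgsym, Fintype.card_fin] using hr
  have hν : r / n = r / 2 - (n - 1) * (n - 2) * c := by
    rw [div_eq_iff (by positivity), mul_comm]
    exact htrace
  intro i j
  rw [hR, hν]

theorem weyl_coincidence_implies_einstein (n : ℕ) (hn : 4 ≤ n)
    (g ginv : Fin n → Fin n → ℝ)
    (hgsym : ∀ i j, g i j = g j i)
    (hginvsym : ∀ i j, ginv i j = ginv j i)
    (hinv : ∀ i j, ∑ k, ginv i k * g k j = if i = j then (1:ℝ) else 0)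
    (R ρ P : Fin n → Fin n → ℝ) (r : ℝ)
    (hr : r = ∑ i, ∑ j, ginv i j * R i j)
    (hρ : ∀ i j, ρ i j = (1/((n:ℝ) - 1)) * ((R i j + R j i)/2)
        + (1/((n:ℝ) + 1)) * ((R i j - R j i)/2))
    (hP : ∀ i j, P i j = (1/((n:ℝ) - 2)) * ((R i j + R j i)/2)
        + (1/(n:ℝ)) * ((R i j - R j i)/2)
        - (r/(2*((n:ℝ) - 2)*((n:ℝ) - 1))) * g i j)
    (heq : ∀ i j k l, ∑ m,
        (((if l = k then (1:ℝ) else 0) * (if i = m then (1:ℝ) else 0)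
            + (if l = m then (1:ℝ) else 0) * (if i = k then (1:ℝ) else 0)) * ρ j m
          - ((if l = k then (1:ℝ) else 0) * (if j = m then (1:ℝ) else 0)
            + (if l = m then (1:ℝ) else 0) * (if j = k then (1:ℝ) else 0)) * ρ i m)
      = ∑ m,
        (((if l = k then (1:ℝ) else 0) * (if i = m then (1:ℝ) else 0)
            + (if l = m then (1:ℝ) else 0) * (if i = k then (1:ℝ) else 0)
            - g l i * ginv k m) * P j m
          - ((if l = k then (1:ℝ) else 0) * (if j = m then (1:ℝ) else 0)
            + (if l = m then (1:ℝ) else 0) * (if j = k then (1:ℝ) else 0)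
            - g l j * ginv k m) * P i m)) :
    ∀ i j, R i j = (r/(n:ℝ)) * g i j :=
  weyl_coincidence_implies_einstein_general n hn g ginv hgsym hinv R ρ P r hr hρ hP heq
end

section
/- Conversely, let n ≥ 2 and suppose R_{ij} = (r/n) g_{ij} for a scalar r (Einstein condition). Then the projective and conformal Schouten tensors ρ and P satisfy 2Σ^{km}_{l[i} ρ_{j]m} = 2S^{km}_{l[i} P_{j]m} for all i,j,k,l; hence the projective and conformal Weyl tensors coincide. -/
theorem einstein_implies_weyl_coincidence (n : ℕ) (hn : 3 ≤ n)
    (g ginv : Fin n → Fin n → ℝ)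
    (hgsym : ∀ i j, g i j = g j i)
    (hginvsym : ∀ i j, ginv i j = ginv j i)
    (hinv : ∀ i j, ∑ k, ginv i k * g k j = if i = j then (1:ℝ) else 0)
    (R ρ P : Fin n → Fin n → ℝ) (r : ℝ)
    (hR : ∀ i j, R i j = (r/(n:ℝ)) * g i j)
    (hρ : ∀ i j, ρ i j = (1/((n:ℝ) - 1)) * ((R i j + R j i)/2)
        + (1/((n:ℝ) + 1)) * ((R i j - R j i)/2))
    (hP : ∀ i j, P i j = (1/((n:ℝ) - 2)) * ((R i j + R j i)/2)
        + (1/(n:ℝ)) * ((R i j - R j i)/2)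
        - ((∑ k, ∑ l, ginv k l * R k l)/(2*((n:ℝ) - 2)*((n:ℝ) - 1))) * g i j) :
    ∀ i j k l, ∑ m,
        (((if l = k then (1:ℝ) else 0) * (if i = m then (1:ℝ) else 0)
            + (if l = m then (1:ℝ) else 0) * (if i = k then (1:ℝ) else 0)) * ρ j m
          - ((if l = k then (1:ℝ) else 0) * (if j = m then (1:ℝ) else 0)
            + (if l = m then (1:ℝ) else 0) * (if j = k then (1:ℝ) else 0)) * ρ i m)
      = ∑ m,
        (((if l = k then (1:ℝ) else 0) * (if i = m then (1:ℝ) else 0)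
            + (if l = m then (1:ℝ) else 0) * (if i = k then (1:ℝ) else 0)
            - g l i * ginv k m) * P j m
          - ((if l = k then (1:ℝ) else 0) * (if j = m then (1:ℝ) else 0)
            + (if l = m then (1:ℝ) else 0) * (if j = k then (1:ℝ) else 0)
            - g l j * ginv k m) * P i m) := by
  have hn3 : (3:ℝ) ≤ (n:ℝ) := by exact_mod_cast hn
  have hnne : (n:ℝ) ≠ 0 := by linarith
  have hn1 : (n:ℝ) - 1 ≠ 0 := by linarith
  have hn2 : (n:ℝ) - 2 ≠ 0 := by linarith
  have hnp1 : (n:ℝ) + 1 ≠ 0 := by linarith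
  have hginvg : ∀ k j, (∑ m, ginv k m * g j m) = if k = j then (1:ℝ) else 0 := by
    intro k j
    rw [← hinv k j]
    exact Finset.sum_congr rfl (fun m _ => by rw [hgsym j m])
  have htrace : (∑ k, ∑ l, ginv k l * R k l) = r := by
    have h1 : (∑ k, ∑ l, ginv k l * R k l) = (r/(n:ℝ)) * ∑ k, ∑ l, ginv k l * g l k := by
      rw [Finset.mul_sum]
      refine Finset.sum_congr rfl (fun k _ => ?_)
      rw [Finset.mul_sum]
      refine Finset.sum_congr rfl (fun l _ => ?_)
      rw [hR k l, hgsym k l]; ring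
    rw [h1]
    have h2 : (∑ k, ∑ l, ginv k l * g l k) = (n:ℝ) := by
      have h3 : ∀ k : Fin n, (∑ l, ginv k l * g l k) = 1 := by
        intro k; rw [hinv k k]; simp
      rw [Finset.sum_congr rfl (fun k _ => h3 k)]; simp
    rw [h2]; field_simp
  set C : ℝ := r / (2*(n:ℝ)*((n:ℝ)-1)) with hC
  have hρ' : ∀ i j, ρ i j = (2*C) * g i j := by
    intro i j
    rw [hρ, hR i j, hR j i, hgsym j i, hC]
    field_simp
    ring
  have hP' : ∀ i j, P i j = C * g i j := by
    intro i j
    rw [hP, hR i j, hR j i, hgsym j i, htrace, hC]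
    field_simp
    ring
  intro i j k l
  simp only [hρ', hP', add_mul, sub_mul, ite_mul, one_mul, zero_mul,
    Finset.sum_add_distrib, Finset.sum_sub_distrib, Finset.sum_ite_eq,
    Finset.mem_univ, if_true]
  have hA : ∀ (x y : Fin n) (c : ℝ),
      (∑ m, if l = k then if x = m then c * g y m else 0 else 0)
        = if l = k then c * g y x else 0 := by
    intro x y c
    by_cases h : l = k <;> simp [h, Finset.sum_ite_eq]
  have hB : ∀ (x y : Fin n) (c : ℝ),
      (∑ m, g l x * ginv k m * (c * g y m))
        = (if k = y then 1 else 0) * (c * g l x) := by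
    intro x y c
    have h1 : (∑ m, g l x * ginv k m * (c * g y m))
        = (g l x * c) * ∑ m, ginv k m * g y m := by
      rw [Finset.mul_sum]
      exact Finset.sum_congr rfl (fun m _ => by ring)
    rw [h1, hginvg k y]
    split_ifs <;> ring
  rw [hA i j (2*C), hA j i (2*C), hA i j C, hA j i C, hB i j C, hB j i C,
    hgsym i l, hgsym j l, hgsym i j]
  clear hgsym hginvsym hinv hR hρ hP hA hB hginvg htrace hρ' hP' hC
  split_ifs
  any_goals ring
  all_goals first | (exact absurd (‹i = k›).symm ‹¬k = i›) | (exact absurd (‹j = k›).symm ‹¬k = j›) | (exact absurd (‹k = i›).symm ‹¬i = k›) | (exact absurd (‹k = j›).symm ‹¬j = k›)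
end

section
/- Let M^{ef}_{abcd} = 2 g_{a[c} δ^e_{d]} δ^f_b + 2 g_{a[d} g_{c]b} g^{ef} + 2(n−1) g_{b[d} δ^f_{c]} δ^e_a on an n-dimensional space with nondegenerate metric g, n ≥ 4. Then for a symmetric bilinear form R_{ef}, the condition M^{ef}_{abcd} R_{ef} = 0 for all a,b,c,d holds if and only if R_{ef} = (r/n) g_{ef} with r = g^{ef}R_{ef}. -/
theorem nurowski_condition_iff_einstein (n : ℕ) (hn : 4 ≤ n)
    (g ginv : Fin n → Fin n → ℝ)
    (hgsym : ∀ i j, g i j = g j i)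
    (hginvsym : ∀ i j, ginv i j = ginv j i)
    (hinv : ∀ i j, ∑ k, ginv i k * g k j = if i = j then (1:ℝ) else 0)
    (R : Fin n → Fin n → ℝ)
    (hRsym : ∀ i j, R i j = R j i) :
    (∀ a b c d, ∑ e, ∑ f,
        ((g a c * (if d = e then (1:ℝ) else 0) - g a d * (if c = e then (1:ℝ) else 0))
            * (if b = f then (1:ℝ) else 0)
          + (g a d * g c b - g a c * g d b) * ginv e f
          + ((n:ℝ) - 1) * (g b d * (if c = f then (1:ℝ) else 0)
              - g b c * (if d = f then (1:ℝ) else 0)) * (if a = e then (1:ℝ) else 0))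
        * R e f = 0)
    ↔ (∀ e f, R e f = ((∑ i, ∑ j, ginv i j * R i j)/(n:ℝ)) * g e f) := by
  have hn4 : (4:ℝ) ≤ (n:ℝ) := by exact_mod_cast hn
  have hn0 : (n:ℝ) ≠ 0 := by linarith
  have hn2 : (n:ℝ) - 2 ≠ 0 := by intro h; linarith
  set S : ℝ := ∑ i, ∑ j, ginv i j * R i j with hS
  -- closed form of the double sum
  have key : ∀ a b c d : Fin n, (∑ e, ∑ f,
        ((g a c * (if d = e then (1:ℝ) else 0) - g a d * (if c = e then (1:ℝ) else 0))
            * (if b = f then (1:ℝ) else 0)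
          + (g a d * g c b - g a c * g d b) * ginv e f
          + ((n:ℝ) - 1) * (g b d * (if c = f then (1:ℝ) else 0)
              - g b c * (if d = f then (1:ℝ) else 0)) * (if a = e then (1:ℝ) else 0))
        * R e f)
      = g a c * R d b - g a d * R c b + (g a d * g c b - g a c * g d b) * S
        + ((n:ℝ)-1) * (g b d * R a c - g b c * R a d) := by
    intro a b c d
    rw [hS]
    simp only [add_mul, sub_mul, mul_ite, ite_mul, mul_one, mul_zero, one_mul, zero_mul,
      Finset.sum_add_distrib, Finset.sum_sub_distrib, Finset.sum_ite_eq, Finset.sum_ite_eq',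
      Finset.mem_univ, if_true, Finset.mul_sum, Finset.sum_mul]
    simp only [Finset.sum_ite_irrel, Finset.sum_const_zero, Finset.sum_ite_eq,
      Finset.sum_ite_eq', Finset.sum_sub_distrib, Finset.mem_univ, if_true]
    simp only [mul_sub, sub_mul, mul_ite, ite_mul, mul_zero, zero_mul, mul_one, one_mul,
      Finset.sum_sub_distrib, Finset.sum_ite_eq, Finset.mem_univ, if_true]
    simp only [mul_assoc, ← Finset.mul_sum]
  constructor
  · intro h e f
    have d1 : ∀ b : Fin n, ∑ d, ginv b d * g e d = if b = e then (1:ℝ) else 0 := fun b => by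
      rw [← hinv b e]; exact Finset.sum_congr rfl fun d _ => by rw [hgsym e d]
    have d2 : ∀ b : Fin n, ∑ d, ginv b d * g d b = (1:ℝ) := fun b => by
      rw [hinv b b]; simp
    have d3 : ∀ d : Fin n, ∑ b, ginv b d * g b f = if d = f then (1:ℝ) else 0 := fun d => by
      rw [← hinv d f]; exact Finset.sum_congr rfl fun b _ => by rw [hginvsym b d]
    have w1 : ∑ b, ∑ d, ginv b d * R d b = S := by
      rw [hS]; exact Finset.sum_congr rfl fun b _ => Finset.sum_congr rfl fun d _ => by
        rw [hRsym d b]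
    have w2 : ∑ b, ∑ d, ginv b d * g e d * R f b = R f e := by
      have h1 : ∀ b : Fin n, ∑ d, ginv b d * g e d * R f b
          = (if b = e then (1:ℝ) else 0) * R f b := fun b => by
        rw [← Finset.sum_mul, d1]
      simp only [h1, ite_mul, one_mul, zero_mul, Finset.sum_ite_eq, Finset.sum_ite_eq',
        Finset.mem_univ, if_true]
    have w3 : ∑ b, ∑ d, ginv b d * g e d * g f b = g f e := by
      have h1 : ∀ b : Fin n, ∑ d, ginv b d * g e d * g f b
          = (if b = e then (1:ℝ) else 0) * g f b := fun b => by
        rw [← Finset.sum_mul, d1]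
      simp only [h1, ite_mul, one_mul, zero_mul, Finset.sum_ite_eq, Finset.sum_ite_eq',
        Finset.mem_univ, if_true]
    have w4 : ∑ b : Fin n, ∑ d, ginv b d * g d b = (n:ℝ) := by
      simp only [d2]; simp
    have w5 : ∑ b : Fin n, ∑ d, ginv b d * g b d = (n:ℝ) := by
      rw [← w4]; exact Finset.sum_congr rfl fun b _ => Finset.sum_congr rfl fun d _ => by
        rw [hgsym b d]
    have w6 : ∑ b, ∑ d, ginv b d * g b f * R e d = R e f := by
      rw [Finset.sum_comm]
      have h1 : ∀ d : Fin n, ∑ b, ginv b d * g b f * R e d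
          = (if d = f then (1:ℝ) else 0) * R e d := fun d => by
        rw [← Finset.sum_mul, d3]
      simp only [h1, ite_mul, one_mul, zero_mul, Finset.sum_ite_eq, Finset.sum_ite_eq',
        Finset.mem_univ, if_true]
    have hsum : ∑ b, ∑ d, ginv b d *
        (g e f * R d b - g e d * R f b + (g e d * g f b - g e f * g d b) * S
          + ((n:ℝ)-1) * (g b d * R e f - g b f * R e d)) = 0 := by
      have h0 : ∀ b d : Fin n, g e f * R d b - g e d * R f b
          + (g e d * g f b - g e f * g d b) * S
          + ((n:ℝ)-1) * (g b d * R e f - g b f * R e d) = 0 := fun b d => by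
        rw [← key e b f d]; exact h e b f d
      simp only [h0, mul_zero, Finset.sum_const_zero]
    have expand : ∑ b, ∑ d, ginv b d *
        (g e f * R d b - g e d * R f b + (g e d * g f b - g e f * g d b) * S
          + ((n:ℝ)-1) * (g b d * R e f - g b f * R e d))
        = g e f * (∑ b, ∑ d, ginv b d * R d b)
          - (∑ b, ∑ d, ginv b d * g e d * R f b)
          + ((∑ b, ∑ d, ginv b d * g e d * g f b) * S
            - (∑ b, ∑ d, ginv b d * g d b) * (g e f * S))
          + (((n:ℝ)-1) * ((∑ b, ∑ d, ginv b d * g b d) * R e f)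
            - ((n:ℝ)-1) * (∑ b, ∑ d, ginv b d * g b f * R e d)) := by
      simp only [Finset.mul_sum, Finset.sum_mul, ← Finset.sum_add_distrib,
        ← Finset.sum_sub_distrib]
      exact Finset.sum_congr rfl fun b _ => Finset.sum_congr rfl fun d _ => by ring
    rw [expand, w1, w2, w3, w4, w5, w6, hRsym f e, hgsym f e] at hsum
    have hg : ((n:ℝ)-2) * (R e f * (n:ℝ)) = ((n:ℝ)-2) * (S * g e f) := by
      linear_combination hsum
    have hfin := mul_left_cancel₀ hn2 hg
    rw [div_mul_eq_mul_div, eq_div_iff hn0]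
    exact hfin
  · intro h a b c d
    rw [key a b c d, h d b, h c b, h a c, h a d, hgsym d b, hgsym c b]
    field_simp
    ring
end

section
/- The map sending a bilinear form P_{jm} to the tensor T_{ij}{}^k{}_l = 2S^{km}_{l[i} P_{j]m} is injective for n ≥ 3, where S^{km}_{li} = δ^k_l δ^m_i + δ^m_l δ^k_i − g_{li}g^{km}: if 2S^{km}_{l[i} P_{j]m} = 0 for all indices, then P = 0. -/
theorem conformal_contribution_injective (n : ℕ) (hn : 3 ≤ n)
    (g ginv : Fin n → Fin n → ℝ)
    (hgsym : ∀ i j, g i j = g j i)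
    (hginvsym : ∀ i j, ginv i j = ginv j i)
    (hinv : ∀ i j, ∑ k, ginv i k * g k j = if i = j then (1:ℝ) else 0)
    (P : Fin n → Fin n → ℝ)
    (hzero : ∀ i j k l, ∑ m,
        (((if l = k then (1:ℝ) else 0) * (if i = m then (1:ℝ) else 0)
            + (if l = m then (1:ℝ) else 0) * (if i = k then (1:ℝ) else 0)
            - g l i * ginv k m) * P j m
          - ((if l = k then (1:ℝ) else 0) * (if j = m then (1:ℝ) else 0)
            + (if l = m then (1:ℝ) else 0) * (if j = k then (1:ℝ) else 0)
            - g l j * ginv k m) * P i m) = 0) :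
    ∀ i j, P i j = 0 := by
  set Q : Fin n → Fin n → ℝ := fun i k => ∑ m, ginv k m * P i m with hQ
  -- expansion of one bracket
  have expand : ∀ (a b k l : Fin n),
      (∑ m, ((if l = k then (1:ℝ) else 0) * (if a = m then (1:ℝ) else 0)
            + (if l = m then (1:ℝ) else 0) * (if a = k then (1:ℝ) else 0)
            - g l a * ginv k m) * P b m)
      = (if l = k then P b a else 0) + (if a = k then P b l else 0) - g l a * Q b k := by
    intro a b k l
    by_cases h1 : l = k <;> by_cases h2 : a = k <;>
      simp [hQ, h1, h2, sub_mul, add_mul, ite_mul, one_mul, zero_mul,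
        Finset.sum_sub_distrib, Finset.sum_add_distrib, Finset.sum_ite_eq,
        Finset.mul_sum, mul_assoc]
  have hz : ∀ i j k l,
      (if l = k then P j i else 0) + (if i = k then P j l else 0) - g l i * Q j k
      - ((if l = k then P i j else 0) + (if j = k then P i l else 0) - g l j * Q i k) = 0 := by
    intro i j k l
    have h := hzero i j k l
    rw [Finset.sum_sub_distrib, expand, expand] at h
    exact h
  -- g ⋅ Q = P
  have gQ : ∀ i j, (∑ k, g j k * Q i k) = P i j := by
    intro i j
    have : (∑ k, g j k * Q i k) = ∑ m, (∑ k, ginv m k * g k j) * P i m := by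
      simp only [hQ, Finset.mul_sum]
      rw [Finset.sum_comm]
      congr 1; ext m
      rw [Finset.sum_mul]
      congr 1; ext k
      rw [hgsym j k, hginvsym m k]; ring
    rw [this]
    simp [hinv, Finset.sum_ite_eq]
  -- symmetry of P
  have hs : ∀ i j, P j i = P i j := by
    intro i j
    have e1 : ∑ l, g l i * Q j l = P j i := by
      rw [← gQ j i]; exact Finset.sum_congr rfl fun l _ => by rw [hgsym l i]
    have e2 : ∑ l, g l j * Q i l = P i j := by
      rw [← gQ i j]; exact Finset.sum_congr rfl fun l _ => by rw [hgsym l j]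
    have h : (∑ l : Fin n, ((if l = l then P j i else 0) + (if i = l then P j l else 0)
        - g l i * Q j l - ((if l = l then P i j else 0) + (if j = l then P i l else 0)
        - g l j * Q i l))) = 0 :=
      Finset.sum_eq_zero fun l _ => hz i j l l
    simp only [if_pos rfl, Finset.sum_sub_distrib, Finset.sum_add_distrib,
      Finset.sum_const, Finset.card_univ, Fintype.card_fin, nsmul_eq_mul,
      Finset.sum_ite_eq, Finset.sum_ite_eq', Finset.mem_univ, if_pos, e1, e2] at h
    have hn' : (n:ℝ) ≠ 0 := by positivity
    have : (n:ℝ) * P j i = (n:ℝ) * P i j := by linarith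
    exact mul_left_cancel₀ hn' this
  set p : ℝ := ∑ a, Q a a with hp
  have key : ∀ i k, ((n:ℝ) - 2) * Q i k + (if i = k then p else 0) = 0 := by
    intro i k
    have A1 : ∑ l, ∑ j, ginv l j * (if l = k then P j i else 0) = Q i k := by
      have h1 : ∀ l, ∑ j, ginv l j * (if l = k then P j i else 0)
          = if l = k then ∑ j, ginv l j * P j i else 0 := by
        intro l; split_ifs <;> simp
      simp only [h1, Finset.sum_ite_eq', Finset.mem_univ, if_true, hQ]
      exact Finset.sum_congr rfl fun j _ => by rw [hs i j]
    have A2 : ∑ l, ∑ j, ginv l j * (if i = k then P j l else 0)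
        = if i = k then p else 0 := by
      split_ifs with h
      · simp only [if_pos h, hp, hQ]
        rw [Finset.sum_comm]
        exact Finset.sum_congr rfl fun j _ => Finset.sum_congr rfl fun l _ => by
          rw [hginvsym l j]
      · simp [h]
    have A3 : ∑ l, ∑ j, ginv l j * (g l i * Q j k) = Q i k := by
      rw [Finset.sum_comm]
      have : ∀ j, ∑ l, ginv l j * (g l i * Q j k)
          = (∑ l, ginv j l * g l i) * Q j k := by
        intro j
        rw [Finset.sum_mul]
        exact Finset.sum_congr rfl fun l _ => by rw [hginvsym l j]; ring
      simp [this, hinv, ite_mul, Finset.sum_ite_eq]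
    have A4 : ∑ l, ∑ j, ginv l j * (if l = k then P i j else 0) = Q i k := by
      have : ∀ l, ∑ j, ginv l j * (if l = k then P i j else 0)
          = if l = k then ∑ j, ginv l j * P i j else 0 := by
        intro l; split_ifs with h <;> simp [h]
      simp [this, Finset.sum_ite_eq', hQ]
    have A5 : ∑ l, ∑ j, ginv l j * (if j = k then P i l else 0) = Q i k := by
      have h5 : ∀ l, ∑ j, ginv l j * (if j = k then P i l else 0)
          = ginv l k * P i l := by
        intro l
        simp [mul_ite, Finset.sum_ite_eq']
      simp only [h5, hQ]
      exact Finset.sum_congr rfl fun l _ => by rw [hginvsym l k]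
    have A6 : ∑ l, ∑ j, ginv l j * (g l j * Q i k) = (n:ℝ) * Q i k := by
      have : ∀ l, ∑ j, ginv l j * (g l j * Q i k)
          = (∑ j, ginv l j * g j l) * Q i k := by
        intro l
        rw [Finset.sum_mul]
        exact Finset.sum_congr rfl fun j _ => by rw [hgsym l j]; ring
      simp only [this, hinv, if_pos rfl]
      simp [Finset.sum_const, mul_assoc]
    have h0 : ∑ l, ∑ j, (ginv l j * ((if l = k then P j i else 0)
          + (if i = k then P j l else 0) - g l i * Q j k)
        - ginv l j * ((if l = k then P i j else 0)
          + (if j = k then P i l else 0) - g l j * Q i k)) = 0 := by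
      apply Finset.sum_eq_zero; intro l _
      apply Finset.sum_eq_zero; intro j _
      rw [← mul_sub, hz i j k l, mul_zero]
    simp only [mul_add, mul_sub, Finset.sum_add_distrib, Finset.sum_sub_distrib] at h0
    rw [A1, A2, A3, A4, A5, A6] at h0
    split_ifs at h0 ⊢ <;> linarith
  -- trace of key gives p = 0
  have hp0 : p = 0 := by
    have h : ∑ i, (((n:ℝ) - 2) * Q i i + (if i = i then p else 0)) = 0 :=
      Finset.sum_eq_zero fun i _ => key i i
    simp only [if_pos rfl, Finset.sum_add_distrib, Finset.sum_const,
      Finset.card_univ, Fintype.card_fin, nsmul_eq_mul, if_true, ← Finset.mul_sum, ← hp] at h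
    have hn3 : (3:ℝ) ≤ (n:ℝ) := by exact_mod_cast hn
    have h2 : (2*(n:ℝ)-2) * p = 0 := by linarith
    have h3 : (0:ℝ) < 2*(n:ℝ)-2 := by linarith
    exact (mul_eq_zero.mp h2).resolve_left (ne_of_gt h3)
  have hQ0 : ∀ i k, Q i k = 0 := by
    intro i k
    have h := key i k
    rw [hp0] at h
    have hn3 : (3:ℝ) ≤ (n:ℝ) := by exact_mod_cast hn
    have h2 : ((n:ℝ)-2) * Q i k = 0 := by split_ifs at h <;> linarith
    have h3 : (0:ℝ) < (n:ℝ)-2 := by linarith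
    exact (mul_eq_zero.mp h2).resolve_left (ne_of_gt h3)
  intro i j
  rw [← gQ i j]
  simp [hQ0]
end

section
/- The map sending a bilinear form ρ_{jm} to the tensor T_{ij}{}^k{}_l = 2Σ^{km}_{l[i} ρ_{j]m} is injective for n ≥ 2, where Σ^{km}_{li} = δ^k_l δ^m_i + δ^m_l δ^k_i: if 2Σ^{km}_{l[i} ρ_{j]m} = 0 for all indices, then ρ = 0. -/
theorem projective_contribution_injective (n : ℕ) (hn : 2 ≤ n)
    (ρ : Fin n → Fin n → ℝ)
    (hzero : ∀ i j k l : Fin n, ∑ m,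
        (((if l = k then (1:ℝ) else 0) * (if i = m then (1:ℝ) else 0)
            + (if l = m then (1:ℝ) else 0) * (if i = k then (1:ℝ) else 0)) * ρ j m
          - ((if l = k then (1:ℝ) else 0) * (if j = m then (1:ℝ) else 0)
            + (if l = m then (1:ℝ) else 0) * (if j = k then (1:ℝ) else 0)) * ρ i m) = 0) :
    ∀ i j, ρ i j = 0 := by
  have key : ∀ i j k l : Fin n,
      (if l = k then ρ j i - ρ i j else 0) + (if i = k then ρ j l else 0)
        - (if j = k then ρ i l else 0) = 0 := by
    intro i j k l
    have h := hzero i j k l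
    simp only [ite_mul, one_mul, zero_mul, add_mul, Finset.sum_sub_distrib,
      Finset.sum_add_distrib, Finset.sum_ite_eq, Finset.mem_univ, if_true] at h
    split_ifs at h ⊢ <;> (try simp only [Fintype.sum_ite_eq, Fintype.sum_ite_eq'] at h) <;> linarith
  have off : ∀ i l : Fin n, ∀ j : Fin n, i ≠ j → l ≠ j → ρ i l = 0 := by
    intro i l j hij hlj
    have h := key i j j l
    simp [hij, hlj] at h
    linarith
  have sym : ∀ i j : Fin n, i ≠ j → 2 * ρ i j = ρ j i := by
    intro i j hij
    have h := key i j j j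
    simp [hij] at h
    linarith
  have : Nontrivial (Fin n) := Fin.nontrivial_iff_two_le.mpr hn
  intro i j
  by_cases hij : i = j
  · subst hij
    obtain ⟨m, hm⟩ := exists_ne i
    exact off i i m (Ne.symm hm) (Ne.symm hm)
  · have h1 := sym i j hij
    have h2 := sym j i (Ne.symm hij)
    linarith
end

section
/- Let n ≥ 4 and suppose the projective and conformal Weyl tensors of a curvature tensor R_{ij}{}^k{}_l coincide, i.e. 2Σ^{km}_{l[i} ρ_{j]m} = 2S^{km}_{l[i} P_{j]m} where ρ, P are built from the Ricci contraction R_{jl} = R_{kj}{}^k{}_l. Then ρ_{ij} = 2P_{ij} = (r/(n(n−1))) g_{ij} with r = g^{jl}R_{jl}; in particular both Schouten tensors are proportional to the metric. -/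
/-!
Contracting the coincidence condition over `k = i` gives nothing, since both Weyl tensors are
trace-free there; the informative contraction is the one with `g^{il}`. After lowering the
remaining upper index with `g` it reads `2ρ - ρᵀ - (tr ρ) g = 2P - Pᵀ - (tr P) g - (n - 1) P`.
Written in terms of the Ricci contraction, the antisymmetric part of this identity is
`(n² - 4) Ric_[ij] = 0` and its symmetric part makes `Ric` a multiple of `g`; taking the trace
identifies the factor as `r / n`, after which both Schouten tensors are explicit multiples of `g`.
-/

open Finset Matrix

namespace WeylSchouten

section Contraction

variable {ι R : Type*} [Fintype ι] [DecidableEq ι] [CommRing R]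

/- `symDelta k m l i` is `Σ^{km}_{li}`, `conformalDelta g ginv k m l i` is `S^{km}_{li}`,
`skewContract Δ X i j k l` is `2 Δ^{km}_{l[i} X_{j]m}`, and `metricContract ginv T j k` contracts
the indices `i, l` of `T i j k l` with `g^{il}`. -/
def symDelta (k m l i : ι) : R :=
  (if l = k then 1 else 0) * (if i = m then 1 else 0)
    + (if l = m then 1 else 0) * (if i = k then 1 else 0)

def conformalDelta (g ginv : Matrix ι ι R) (k m l i : ι) : R :=
  symDelta k m l i - g l i * ginv k m

def skewContract (Δ : ι → ι → ι → ι → R) (X : Matrix ι ι R) (i j k l : ι) : R :=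
  ∑ m, (Δ k m l i * X j m - Δ k m l j * X i m)

def metricTrace (ginv X : Matrix ι ι R) : R := ∑ i, ∑ l, ginv i l * X i l

def metricContract (ginv : Matrix ι ι R) (T : ι → ι → ι → ι → R) (j k : ι) : R :=
  ∑ i, ∑ l, ginv i l * T i j k l

theorem sum_symDelta_mul (k l i : ι) (x : ι → R) :
    ∑ m, symDelta k m l i * x m = (if l = k then x i else 0) + (if i = k then x l else 0) := by
  simp [symDelta, add_mul, sum_add_distrib, ite_mul]

theorem metricContract_skewContract_symDelta {ginv : Matrix ι ι R} (hginv : ginv.IsSymm)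
    (X : Matrix ι ι R) (j k : ι) :
    metricContract ginv (skewContract symDelta X) j k
      = ((2 • X - Xᵀ) * ginv - metricTrace ginv X • (1 : Matrix ι ι R)) j k := by
  simp only [metricContract, skewContract, sum_sub_distrib, sum_symDelta_mul]
  have hs : ∀ a, ginv k a = ginv a k := fun a => hginv.apply a k
  simp only [mul_add, mul_sub, mul_ite, mul_zero, sum_add_distrib, sum_sub_distrib, sum_ite_eq',
    mem_univ, if_true, sum_ite_irrel, sum_const_zero]
  simp only [Matrix.sub_apply, Matrix.smul_apply, Matrix.mul_apply, Matrix.one_apply,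
    transpose_apply, metricTrace, smul_eq_mul, mul_ite, mul_one, mul_zero, hs, mul_comm (ginv _ _),
    two_nsmul, Matrix.add_apply, add_mul, sub_mul]
  ring

theorem skewContract_conformalDelta {ginv : Matrix ι ι R} (hginv : ginv.IsSymm)
    (g X : Matrix ι ι R) (i j k l : ι) :
    skewContract (conformalDelta g ginv) X i j k l
      = skewContract symDelta X i j k l - (g l i * (X * ginv) j k - g l j * (X * ginv) i k) := by
  simp only [skewContract, conformalDelta, sub_mul, sum_sub_distrib, Matrix.mul_apply, mul_sum,
    hginv.apply k, mul_assoc, mul_comm (ginv k _)]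
  ring

theorem metricContract_skewContract_conformalDelta {g ginv : Matrix ι ι R} (hginv : ginv.IsSymm)
    (hinv : ginv * g = 1) (X : Matrix ι ι R) (j k : ι) :
    metricContract ginv (skewContract (conformalDelta g ginv) X) j k
      = ((2 • X - Xᵀ) * ginv - metricTrace ginv X • (1 : Matrix ι ι R)
          - ((Fintype.card ι : R) - 1) • (X * ginv)) j k := by
  have htr : ∑ i, ∑ l, ginv i l * g l i = Fintype.card ι := by
    simpa [Matrix.trace, Matrix.mul_apply] using congrArg Matrix.trace hinv
  have hδ : ∀ i, ∑ l, ginv i l * g l j = if i = j then 1 else 0 := fun i => by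
    simpa [Matrix.mul_apply, Matrix.one_apply] using congrFun₂ hinv i j
  have h := metricContract_skewContract_symDelta hginv X j k
  simp only [metricContract, skewContract_conformalDelta hginv, mul_sub, sum_sub_distrib] at h ⊢
  rw [h]
  simp only [← mul_assoc, ← sum_mul, htr, hδ, ite_mul, one_mul, zero_mul, sum_ite_eq', mem_univ,
    if_true]
  simp only [Matrix.sub_apply, Matrix.smul_apply, smul_eq_mul]
  ring

theorem traced_eq_of_skewContract_eq {g ginv ρ P : Matrix ι ι R} (hginv : ginv.IsSymm)
    (hinv : ginv * g = 1)
    (h : ∀ i j k l,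
      skewContract symDelta ρ i j k l = skewContract (conformalDelta g ginv) P i j k l) :
    2 • ρ - ρᵀ - metricTrace ginv ρ • g
      = 2 • P - Pᵀ - metricTrace ginv P • g - ((Fintype.card ι : R) - 1) • P := by
  have hcontr : (2 • ρ - ρᵀ) * ginv - metricTrace ginv ρ • (1 : Matrix ι ι R)
      = (2 • P - Pᵀ) * ginv - metricTrace ginv P • (1 : Matrix ι ι R)
        - ((Fintype.card ι : R) - 1) • (P * ginv) := by
    ext j k
    rw [← metricContract_skewContract_symDelta hginv,
      ← metricContract_skewContract_conformalDelta hginv hinv]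
    simp only [metricContract, h]
  simpa only [Matrix.sub_mul, Matrix.smul_mul, Matrix.mul_assoc, hinv, Matrix.mul_one,
    Matrix.one_mul] using congrArg (· * g) hcontr

theorem eq_metricTrace_div_smul {K : Type*} [Field K] [CharZero K] {g ginv X : Matrix ι ι K}
    (hg : g.IsSymm) (hinv : ginv * g = 1) {κ : K} (hX : X = κ • g) :
    X = (metricTrace ginv X / Fintype.card ι) • g := by
  rcases isEmpty_or_nonempty ι with hι | hι
  · exact Subsingleton.elim _ _
  have htr : metricTrace ginv g = Fintype.card ι := by
    simpa [Matrix.trace, Matrix.mul_apply, metricTrace, hg.apply] using congrArg Matrix.trace hinv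
  have hsmul : metricTrace ginv X = κ * metricTrace ginv g := by
    simp only [hX, metricTrace, Matrix.smul_apply, smul_eq_mul, mul_sum, mul_left_comm κ]
  rw [hsmul, htr, mul_div_cancel_right₀ _ (Nat.cast_ne_zero.2 Fintype.card_ne_zero), ← hX]

end Contraction

section LinearOrderedField

variable {ι K : Type*} [Field K] [LinearOrder K] [IsStrictOrderedRing K]

theorem ricci_eq_smul_of_traced_eq {d t u r : K} (hd : 2 < d) {g ρ P Ric : Matrix ι ι K}
    (hg : g.IsSymm)
    (hρ : ∀ i j, ρ i j = (1 / (d - 1)) * ((Ric i j + Ric j i) / 2)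
        + (1 / (d + 1)) * ((Ric i j - Ric j i) / 2))
    (hP : ∀ i j, P i j = (1 / (d - 2)) * ((Ric i j + Ric j i) / 2)
        + (1 / d) * ((Ric i j - Ric j i) / 2) - (r / (2 * (d - 2) * (d - 1))) * g i j)
    (h : 2 • ρ - ρᵀ - t • g = 2 • P - Pᵀ - u • g - (d - 1) • P) :
    Ric = (((d - 1) * (t - u) + r / 2) / d) • g := by
  have hd0 : d ≠ 0 := by positivity
  have hd1 : d - 1 ≠ 0 := by linarith
  have hd2 : d - 2 ≠ 0 := by linarith
  have hd3 : d + 1 ≠ 0 := by linarith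
  ext j m
  have entry : ∀ a b, 2 * ρ a b - ρ b a - t * g a b
      = 2 * P a b - P b a - u * g a b - (d - 1) * P a b := fun a b => by
    have hab := congrFun₂ h a b
    simp only [Matrix.sub_apply, Matrix.smul_apply, transpose_apply, smul_eq_mul] at hab
    linear_combination hab
  have hjm := entry j m
  have hmj := entry m j
  rw [hρ, hρ, hP, hP, hg.apply j m] at hjm hmj
  have hanti : (Ric j m - Ric m j) * (3 / (d + 1) - (4 - d) / d) = 0 := by
    linear_combination hjm - hmj
  have hsym : Ric j m = Ric m j := by
    have hne : 3 / (d + 1) - (4 - d) / d ≠ 0 := by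
      rw [div_sub_div _ _ hd3 hd0]
      refine div_ne_zero ?_ (mul_ne_zero hd3 hd0)
      nlinarith
    linear_combination (mul_eq_zero.1 hanti).resolve_right hne
  rw [← hsym] at hjm
  rw [Matrix.smul_apply, smul_eq_mul]
  field_simp at hjm ⊢
  refine mul_left_cancel₀ (mul_ne_zero (mul_ne_zero hd0 hd3) hd2) ?_
  linear_combination hjm

theorem schouten_eq_of_ricci_eq_smul {d r : K} (hd : 2 < d) {g ρ P Ric : Matrix ι ι K}
    (hg : g.IsSymm) (hRic : Ric = (r / d) • g)
    (hρ : ∀ i j, ρ i j = (1 / (d - 1)) * ((Ric i j + Ric j i) / 2)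
        + (1 / (d + 1)) * ((Ric i j - Ric j i) / 2))
    (hP : ∀ i j, P i j = (1 / (d - 2)) * ((Ric i j + Ric j i) / 2)
        + (1 / d) * ((Ric i j - Ric j i) / 2) - (r / (2 * (d - 2) * (d - 1))) * g i j)
    (i j : ι) :
    ρ i j = (r / (d * (d - 1))) * g i j
      ∧ P i j = (r / (2 * d * (d - 1))) * g i j
      ∧ ρ i j = 2 * P i j := by
  have hd1 : d - 1 ≠ 0 := by linarith
  have hρ' : ρ i j = (r / (d * (d - 1))) * g i j := by
    rw [hρ, hRic, Matrix.smul_apply, Matrix.smul_apply, smul_eq_mul, smul_eq_mul, hg.apply i j]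
    field_simp
    ring
  have hP' : P i j = (r / (2 * d * (d - 1))) * g i j := by
    rw [hP, hRic, Matrix.smul_apply, Matrix.smul_apply, smul_eq_mul, smul_eq_mul, hg.apply i j]
    field_simp
    ring
  refine ⟨hρ', hP', ?_⟩
  rw [hρ', hP']
  field_simp

end LinearOrderedField

end WeylSchouten

open WeylSchouten in
theorem weyl_coincidence_schouten_proportional_general (n : ℕ) (hn : 4 ≤ n)
    (g ginv : Fin n → Fin n → ℝ)
    (hgsym : ∀ i j, g i j = g j i)
    (hginvsym : ∀ i j, ginv i j = ginv j i)
    (hinv : ∀ i j, ∑ k, ginv i k * g k j = if i = j then (1:ℝ) else 0)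
    (Ric ρ P : Fin n → Fin n → ℝ) (r : ℝ)
    (hr : r = ∑ j, ∑ l, ginv j l * Ric j l)
    (hρ : ∀ i j, ρ i j = (1/((n:ℝ) - 1)) * ((Ric i j + Ric j i)/2)
        + (1/((n:ℝ) + 1)) * ((Ric i j - Ric j i)/2))
    (hP : ∀ i j, P i j = (1/((n:ℝ) - 2)) * ((Ric i j + Ric j i)/2)
        + (1/(n:ℝ)) * ((Ric i j - Ric j i)/2)
        - (r/(2*((n:ℝ) - 2)*((n:ℝ) - 1))) * g i j)
    (heq : ∀ i j k l, ∑ m,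
        (((if l = k then (1:ℝ) else 0) * (if i = m then (1:ℝ) else 0)
            + (if l = m then (1:ℝ) else 0) * (if i = k then (1:ℝ) else 0)) * ρ j m
          - ((if l = k then (1:ℝ) else 0) * (if j = m then (1:ℝ) else 0)
            + (if l = m then (1:ℝ) else 0) * (if j = k then (1:ℝ) else 0)) * ρ i m)
      = ∑ m,
        (((if l = k then (1:ℝ) else 0) * (if i = m then (1:ℝ) else 0)
            + (if l = m then (1:ℝ) else 0) * (if i = k then (1:ℝ) else 0)
            - g l i * ginv k m) * P j m
          - ((if l = k then (1:ℝ) else 0) * (if j = m then (1:ℝ) else 0)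
            + (if l = m then (1:ℝ) else 0) * (if j = k then (1:ℝ) else 0)
            - g l j * ginv k m) * P i m)) :
    ∀ i j, ρ i j = (r/((n:ℝ)*((n:ℝ) - 1))) * g i j
      ∧ P i j = (r/(2*(n:ℝ)*((n:ℝ) - 1))) * g i j
      ∧ ρ i j = 2 * P i j := by
  have hd : (2 : ℝ) < n := by exact_mod_cast (show 2 < n by omega)
  have hg : Matrix.IsSymm g := Matrix.IsSymm.ext fun i j => hgsym j i
  have hginv : Matrix.IsSymm ginv := Matrix.IsSymm.ext fun i j => hginvsym j i
  have htraced := traced_eq_of_skewContract_eq hginv (Matrix.ext hinv) heq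
  rw [Fintype.card_fin] at htraced
  have hRic := eq_metricTrace_div_smul hg (Matrix.ext hinv)
    (ricci_eq_smul_of_traced_eq hd hg hρ hP htraced)
  rw [← show r = metricTrace ginv Ric from hr, Fintype.card_fin] at hRic
  exact schouten_eq_of_ricci_eq_smul hd hg hRic hρ hP

theorem weyl_coincidence_schouten_proportional (n : ℕ) (hn : 4 ≤ n)
    (g ginv : Fin n → Fin n → ℝ)
    (hgsym : ∀ i j, g i j = g j i)
    (hginvsym : ∀ i j, ginv i j = ginv j i)
    (hinv : ∀ i j, ∑ k, ginv i k * g k j = if i = j then (1:ℝ) else 0)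
    (Riem : Fin n → Fin n → Fin n → Fin n → ℝ)
    (Ric ρ P : Fin n → Fin n → ℝ) (r : ℝ)
    (hRic : ∀ j l, Ric j l = ∑ k, Riem k j k l)
    (hr : r = ∑ j, ∑ l, ginv j l * Ric j l)
    (hρ : ∀ i j, ρ i j = (1/((n:ℝ) - 1)) * ((Ric i j + Ric j i)/2)
        + (1/((n:ℝ) + 1)) * ((Ric i j - Ric j i)/2))
    (hP : ∀ i j, P i j = (1/((n:ℝ) - 2)) * ((Ric i j + Ric j i)/2)
        + (1/(n:ℝ)) * ((Ric i j - Ric j i)/2)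
        - (r/(2*((n:ℝ) - 2)*((n:ℝ) - 1))) * g i j)
    (heq : ∀ i j k l, ∑ m,
        (((if l = k then (1:ℝ) else 0) * (if i = m then (1:ℝ) else 0)
            + (if l = m then (1:ℝ) else 0) * (if i = k then (1:ℝ) else 0)) * ρ j m
          - ((if l = k then (1:ℝ) else 0) * (if j = m then (1:ℝ) else 0)
            + (if l = m then (1:ℝ) else 0) * (if j = k then (1:ℝ) else 0)) * ρ i m)
      = ∑ m,
        (((if l = k then (1:ℝ) else 0) * (if i = m then (1:ℝ) else 0)
            + (if l = m then (1:ℝ) else 0) * (if i = k then (1:ℝ) else 0)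
            - g l i * ginv k m) * P j m
          - ((if l = k then (1:ℝ) else 0) * (if j = m then (1:ℝ) else 0)
            + (if l = m then (1:ℝ) else 0) * (if j = k then (1:ℝ) else 0)
            - g l j * ginv k m) * P i m)) :
    ∀ i j, ρ i j = (r/((n:ℝ)*((n:ℝ) - 1))) * g i j
      ∧ P i j = (r/(2*(n:ℝ)*((n:ℝ) - 1))) * g i j
      ∧ ρ i j = 2 * P i j :=
  weyl_coincidence_schouten_proportional_general n hn g ginv hgsym hginvsym hinv Ric ρ P r hr hρ hP
    heq
end
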